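/- arXiv:1511.02307 — 3 statements merged into one kernel-verified Lean document; each statement's English description precedes it below -/
import Mathlib

section
/- Let Ω be a measurable space and f₁,…,f_K : Ω → ℝ be measurable functions. Then for any probability measure P on Ω (for which all f_i are integrable), there exists a probability measure P' on Ω whose support has at most K+1 points such that ∫ f_i dP = ∫ f_i dP' for every 1 ≤ i ≤ K. -/
/-!
The mean `v = ∫ F dP` of `F = (f₁, …, f_K)` lies in the convex hull of the range of `F`, and
Carathéodory's theorem writes it as a convex combination of at most `K + 1` values of `F`.

That `v` lies in the hull goes by induction on `K`. It lies in the closed convex hull; if it is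
not in the hull itself, a nonzero functional `ℓ` supports the hull at `v`, and since
`∫ ℓ ∘ F dP = ℓ v` we get `ℓ ∘ F = ℓ v` almost everywhere. On the hyperplane `ℓ = ℓ v` one
coordinate is determined by the others, so after moving `F` onto the hyperplane on a null set,
the induction hypothesis for the remaining `K - 1` coordinates lifts back to `v`.
-/

open MeasureTheory Set

theorem Convex.exists_ne_zero_forall_le_of_mem_closure_of_notMem {E : Type*}
    [NormedAddCommGroup E] [NormedSpace ℝ E] [FiniteDimensional ℝ E] {C : Set E}
    (hC : Convex ℝ C) {x : E} (hxC : x ∈ closure C) (hx : x ∉ C) :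
    ∃ f : StrongDual ℝ E, f ≠ 0 ∧ ∀ a ∈ C, f a ≤ f x := by
  rcases (interior C).eq_empty_or_nonempty with hint | hint
  · -- `C` spans a proper affine subspace, which is closed and hence also contains `x`.
    have hCne : C.Nonempty := closure_nonempty_iff.1 ⟨x, hxC⟩
    have hdir : (affineSpan ℝ C).direction < ⊤ := by
      rw [lt_top_iff_ne_top, Ne, AffineSubspace.direction_eq_top_iff_of_nonempty
        (hCne.mono (subset_affineSpan ℝ C)), ← hC.interior_nonempty_iff_affineSpan_eq_top, hint]
      exact not_nonempty_empty
    obtain ⟨φ, hφ, hφdir⟩ := Submodule.exists_dual_map_eq_bot_of_lt_top hdir inferInstance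
    have hx_span : x ∈ affineSpan ℝ C := closure_minimal (subset_affineSpan ℝ C)
      (AffineSubspace.closed_of_finiteDimensional _) hxC
    refine ⟨LinearMap.toContinuousLinearMap φ, by simpa using hφ, fun a ha => le_of_eq ?_⟩
    have : φ (a -ᵥ x) = 0 := by
      rw [← Submodule.mem_bot ℝ, ← hφdir]
      exact Submodule.mem_map_of_mem
        (AffineSubspace.vsub_mem_direction (subset_affineSpan ℝ C ha) hx_span)
    simpa [sub_eq_zero] using this
  · exact geometric_hahn_banach_of_nonempty_interior_point hC (fun h => hx (interior_subset h)) hint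

theorem LinearMap.exists_apply_single_ne_zero {R ι : Type*} [Semiring R] [Finite ι]
    [DecidableEq ι] {φ : (ι → R) →ₗ[R] R} (hφ : φ ≠ 0) : ∃ j, φ (Pi.single j 1) ≠ 0 := by
  by_contra! h
  refine hφ (LinearMap.pi_ext fun i x => ?_)
  rw [← mul_one x, ← smul_eq_mul, Pi.single_smul, map_smul, h i]
  simp

theorem LinearMap.eq_of_apply_eq_of_comp_succAbove_eq {𝕜 : Type*} [Field 𝕜] {m : ℕ}
    {j : Fin (m + 1)} {φ : (Fin (m + 1) → 𝕜) →ₗ[𝕜] 𝕜}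
    (hj : φ (Pi.single j 1) ≠ 0) {u v : Fin (m + 1) → 𝕜} (hφ : φ u = φ v)
    (h : u ∘ j.succAbove = v ∘ j.succAbove) : u = v := by
  have hsingle : u - v = Pi.single j ((u - v) j) := by
    ext k
    rcases j.eq_self_or_eq_succAbove k with rfl | ⟨i, rfl⟩
    · simp
    · simpa [sub_eq_zero, Fin.succAbove_ne] using congr_fun h i
  have : (u - v) j * φ (Pi.single j 1) = 0 := by
    rw [← smul_eq_mul, ← map_smul, ← Pi.single_smul, smul_eq_mul, mul_one, ← hsingle, map_sub,
      hφ, sub_self]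
  rw [← sub_eq_zero, hsingle, (mul_eq_zero.1 this).resolve_right hj, Pi.single_zero]

theorem ae_eq_integral_of_ae_le_integral {Ω : Type*} [MeasurableSpace Ω] {P : Measure Ω}
    [IsProbabilityMeasure P] {h : Ω → ℝ} (hh : Integrable h P)
    (hle : ∀ᵐ ω ∂P, h ω ≤ ∫ ω, h ω ∂P) : ∀ᵐ ω ∂P, h ω = ∫ ω, h ω ∂P :=
  (integral_eq_iff_of_ae_le hh (integrable_const _) hle).1 (by simp)

theorem exists_ae_eq_range_subset_inter {Ω α : Type*} [MeasurableSpace Ω] {P : Measure Ω}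
    [NeZero P] {F : Ω → α} {s : Set α} (hs : ∀ᵐ ω ∂P, F ω ∈ s) :
    ∃ G : Ω → α, G =ᵐ[P] F ∧ range G ⊆ range F ∩ s := by
  classical
  obtain ⟨ω₀, hω₀⟩ := hs.exists
  refine ⟨fun ω => if F ω ∈ s then F ω else F ω₀, ?_, ?_⟩
  · filter_upwards [hs] with ω hω
    simp [hω]
  · rintro _ ⟨ω, rfl⟩
    by_cases hω : F ω ∈ s <;> simp [hω, hω₀]

theorem integral_mem_convexHull_range {Ω : Type*} [MeasurableSpace Ω] (P : Measure Ω)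
    [IsProbabilityMeasure P] : ∀ {K : ℕ} (F : Ω → Fin K → ℝ), Integrable F P →
    ∫ ω, F ω ∂P ∈ convexHull ℝ (range F)
  | 0, F, _ => by
    obtain ⟨ω⟩ := nonempty_of_isProbabilityMeasure P
    rw [Subsingleton.elim (∫ ω, F ω ∂P) (F ω)]
    exact subset_convexHull ℝ _ (mem_range_self ω)
  | m + 1, F, hF => by
    set v := ∫ ω, F ω ∂P
    by_contra hv
    have hv_closure : v ∈ closure (convexHull ℝ (range F)) :=
      (convex_convexHull ℝ _).closure.integral_mem isClosed_closure
        (ae_of_all _ fun ω => subset_closure (subset_convexHull ℝ _ (mem_range_self ω))) hF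
    obtain ⟨ℓ, hℓ0, hℓ⟩ :=
      (convex_convexHull ℝ _).exists_ne_zero_forall_le_of_mem_closure_of_notMem hv_closure hv
    have hℓv : ∫ ω, ℓ (F ω) ∂P = ℓ v := ℓ.integral_comp_comm hF
    have hlevel : ∀ᵐ ω ∂P, F ω ∈ {y | ℓ y = ℓ v} :=
      hℓv ▸ ae_eq_integral_of_ae_le_integral (ℓ.integrable_comp hF)
        (ae_of_all _ fun ω => hℓv ▸ hℓ _ (subset_convexHull ℝ _ (mem_range_self ω)))
    obtain ⟨G, hGF, hG⟩ := exists_ae_eq_range_subset_inter hlevel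
    have hG_level : convexHull ℝ (range G) ⊆ {y | ℓ y = ℓ v} :=
      convexHull_min (hG.trans inter_subset_right) (convex_hyperplane ℓ.toLinearMap.isLinear _)
    obtain ⟨j, hj⟩ :=
      LinearMap.exists_apply_single_ne_zero (φ := ℓ.toLinearMap) (by exact_mod_cast hℓ0)
    let π := LinearMap.funLeft ℝ ℝ j.succAbove
    have hIH := integral_mem_convexHull_range P (π ∘ G)
      (π.toContinuousLinearMap.integrable_comp (hF.congr hGF.symm))
    rw [range_comp, ← LinearMap.image_convexHull] at hIH
    obtain ⟨u, hu, hπu⟩ := hIH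
    have hπv : ∫ ω, (π ∘ G) ω ∂P = π v := by
      rw [integral_congr_ae (hGF.fun_comp π)]
      exact π.toContinuousLinearMap.integral_comp_comm hF
    have hu_eq : u = v :=
      LinearMap.eq_of_apply_eq_of_comp_succAbove_eq hj (hG_level hu) (hπu.trans hπv)
    exact hv (hu_eq ▸ convexHull_mono (hG.trans inter_subset_left) hu)

theorem exists_weights_of_mem_convexHull_range {Ω E : Type*} [AddCommGroup E] [Module ℝ E]
    [FiniteDimensional ℝ E] {n : ℕ} (hn : Module.finrank ℝ E ≤ n) {F : Ω → E} {v : E}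
    (hv : v ∈ convexHull ℝ (range F)) :
    ∃ (x : Fin (n + 1) → Ω) (p : Fin (n + 1) → ℝ),
      (∀ j, 0 ≤ p j) ∧ ∑ j, p j = 1 ∧ ∑ j, p j • F (x j) = v := by
  obtain ⟨_, ω₀, -⟩ := convexHull_nonempty_iff.1 ⟨v, hv⟩
  obtain ⟨ι, _, z, w, hz, hind, hw0, hw1, hwz⟩ := eq_pos_convex_span_of_mem_convexHull hv
  choose y hy using fun i => hz (mem_range_self i)
  have hcard : Fintype.card ι ≤ n + 1 :=
    hind.card_le_finrank_succ.trans (Nat.succ_le_succ ((Submodule.finrank_le _).trans hn))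
  let e : ι ↪ Fin (n + 1) := (Fintype.equivFin ι).toEmbedding.trans (Fin.castLEEmb hcard)
  set p := Function.extend e w 0
  have hp_zero : ∀ j ∉ range e, p j = 0 := fun j hj => Function.extend_apply' _ _ _ hj
  have hp_e : ∀ i, p (e i) = w i := e.injective.extend_apply _ _
  have hx_e : ∀ i, Function.extend e y (fun _ => ω₀) (e i) = y i := e.injective.extend_apply _ _
  refine ⟨Function.extend e y fun _ => ω₀, p, fun j => ?_, ?_, ?_⟩
  · by_cases hj : j ∈ range e
    · obtain ⟨i, rfl⟩ := hj
      exact (hp_e i).symm ▸ (hw0 i).le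
    · exact (hp_zero j hj).ge
  · exact (Fintype.sum_of_injective e e.injective w p hp_zero fun i => (hp_e i).symm).symm.trans hw1
  · refine (Fintype.sum_of_injective e e.injective (fun i => w i • z i) _ ?_ ?_).symm.trans hwz
    · intro j hj
      simp [hp_zero j hj]
    · intro i
      simp [hp_e, hx_e, hy]

theorem integral_sum_smul_dirac {Ω E ι : Type*} [MeasurableSpace Ω] [NormedAddCommGroup E]
    [NormedSpace ℝ E] [CompleteSpace E] [Fintype ι] (x : ι → Ω) {p : ι → ℝ} (hp : ∀ j, 0 ≤ p j)
    {h : Ω → E} (hh : StronglyMeasurable h) :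
    ∫ a, h a ∂(Measure.sum fun j => ENNReal.ofReal (p j) • Measure.dirac (x j))
      = ∑ j, p j • h (x j) := by
  rw [Measure.sum_fintype, integral_finsetSum_measure fun j _ =>
    (integrable_dirac' hh enorm_lt_top).smul_measure ENNReal.ofReal_ne_top]
  refine Finset.sum_congr rfl fun j _ => ?_
  rw [integral_smul_measure, integral_dirac' h (x j) hh, ENNReal.toReal_ofReal (hp j)]

theorem stmt_0 {Ω : Type*} [MeasurableSpace Ω] (K : ℕ) (f : Fin K → Ω → ℝ)
    (hf : ∀ i, Measurable (f i)) (P : Measure Ω) [IsProbabilityMeasure P]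
    (hint : ∀ i, Integrable (f i) P) :
    ∃ (x : Fin (K + 1) → Ω) (w : Fin (K + 1) → ENNReal),
      (∑ j, w j = 1) ∧
      ∀ i, ∫ a, f i a ∂P
          = ∫ a, f i a ∂(Measure.sum (fun j : Fin (K + 1) => w j • Measure.dirac (x j))) := by
  obtain ⟨x, p, hp0, hp1, hpv⟩ := exists_weights_of_mem_convexHull_range
    (Module.finrank_fin_fun ℝ).le (integral_mem_convexHull_range P _ (Integrable.of_eval hint))
  refine ⟨x, fun j => ENNReal.ofReal (p j), ?_, fun i => ?_⟩
  · rw [← ENNReal.ofReal_sum_of_nonneg fun j _ => hp0 j, hp1, ENNReal.ofReal_one]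
  · rw [integral_sum_smul_dirac x hp0 (hf i).stronglyMeasurable, ← eval_integral hint i, ← hpv]
    simp [Finset.sum_apply]
end

section
/- For every a₀, a₁, …, a_n ∈ ℝ, the function g(x) = H₂(x) + Σ_{i=0}^{n} a_i x^i has the property that its derivative g' has at most n+1 roots in the open interval (0,1). -/
/-!
Write `g = H₂ + p` with `deg p ≤ n`. On `(0, 1)` one has `H₂' x = log (1 - x) - log x` and
`H₂^(k+2) x = k! ((-1)^(k+1) x^(-(k+1)) - (1 - x)^(-(k+1)))`; each of these vanishes at most at
`x = 1/2`, as seen by comparing absolute values. Since `p^(n+1) = 0`, the `(n+1)`-st derivative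
of `g'` is `H₂^(n+2)`, which has at most one zero, and by Rolle's theorem each integration adds at
most one zero, so `g'` has at most `n + 1` zeros.
-/

noncomputable def binEnt (x : ℝ) : ℝ := -x * Real.log x - (1 - x) * Real.log (1 - x)

open Set Polynomial Real

theorem Set.encard_le_encard_add_one_of_interleaved {α : Type*} [LinearOrder α] {s t : Set α}
    (h : ∀ x ∈ s, ∀ y ∈ s, x < y → ∃ z ∈ t, x < z ∧ z < y) : s.encard ≤ t.encard + 1 := by
  obtain ht | ht := t.finite_or_infinite
  swap
  · simp [ht.encard_eq]
  by_contra! hlt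
  obtain ⟨u, hus, hu⟩ := exists_subset_encard_eq (Order.add_one_le_of_lt hlt)
  have hfin : u.Finite := finite_of_encard_eq_coe (k := ht.toFinset.card + 2) <| by
    rw [hu, ht.encard_eq_coe_toFinset_card]; rfl
  have hcard : hfin.toFinset.card ≤ ht.toFinset.card + 1 :=
    Finset.card_le_of_interleaved fun x hx y hy hxy _ => by
      simpa using h x (hus (by simpa using hx)) y (hus (by simpa using hy)) hxy
  rw [hfin.encard_eq_coe_toFinset_card, ht.encard_eq_coe_toFinset_card] at hu
  norm_cast at hu
  omega

theorem encard_zeros_le_encard_zeros_deriv_add_one {s : Set ℝ} (hs : s.OrdConnected) {f : ℝ → ℝ}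
    (hf : ContinuousOn f s) :
    {x ∈ s | f x = 0}.encard ≤ {x ∈ s | deriv f x = 0}.encard + 1 :=
  encard_le_encard_add_one_of_interleaved fun x hx y hy hxy => by
    obtain ⟨z, hz, hz'⟩ :=
      exists_deriv_eq_zero hxy (hf.mono (hs.out hx.1 hy.1)) (hx.2.trans hy.2.symm)
    exact ⟨z, ⟨hs.out hx.1 hy.1 (Ioo_subset_Icc_self hz), hz'⟩, hz⟩

theorem encard_zeros_le_of_hasDerivAt_succ {s : Set ℝ} (hs : s.OrdConnected) {F : ℕ → ℝ → ℝ}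
    (hF : ∀ k, ∀ x ∈ s, HasDerivAt (F k) (F (k + 1) x) x) (k : ℕ) :
    {x ∈ s | F 0 x = 0}.encard ≤ {x ∈ s | F k x = 0}.encard + k := by
  induction k with
  | zero => simp
  | succ k ih =>
    have hderiv : {x ∈ s | deriv (F k) x = 0} = {x ∈ s | F (k + 1) x = 0} := by
      ext x
      exact and_congr_right fun hx => by rw [(hF k x hx).deriv]
    have hrolle := encard_zeros_le_encard_zeros_deriv_add_one hs
      (f := F k) fun x hx => (hF k x hx).continuousAt.continuousWithinAt
    rw [hderiv] at hrolle
    calc _ ≤ _ := ih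
      _ ≤ {x ∈ s | F (k + 1) x = 0}.encard + 1 + k := by gcongr
      _ = _ := by push_cast; ring

/-- `binEntDeriv k` is the `(k + 1)`-st derivative of `binEnt` on `(0, 1)`. -/
noncomputable def binEntDeriv : ℕ → ℝ → ℝ
  | 0, x => log (1 - x) - log x
  | k + 1, x => k.factorial * ((-1) ^ (k + 1) * x ^ (-(k + 1 : ℤ)) - (1 - x) ^ (-(k + 1 : ℤ)))

theorem hasDerivAt_binEnt {x : ℝ} (hx₀ : x ≠ 0) (hx₁ : 1 - x ≠ 0) :
    HasDerivAt binEnt (binEntDeriv 0 x) x := by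
  have h := ((hasDerivAt_mul_log hx₀).neg).sub
    ((hasDerivAt_mul_log hx₁).comp x ((hasDerivAt_id x).const_sub 1))
  refine (h.congr_deriv ?_).congr_of_eventuallyEq (.of_forall fun y => ?_)
  · simp only [binEntDeriv]; ring
  · simp only [binEnt, Function.comp_apply, Pi.sub_apply, Pi.neg_apply]; ring

theorem hasDerivAt_binEntDeriv (k : ℕ) {x : ℝ} (hx₀ : x ≠ 0) (hx₁ : 1 - x ≠ 0) :
    HasDerivAt (binEntDeriv k) (binEntDeriv (k + 1) x) x := by
  have hsub : HasDerivAt (fun y : ℝ => 1 - y) (-1) x := by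
    simpa using (hasDerivAt_id x).const_sub 1
  cases k with
  | zero =>
    refine (((hasDerivAt_log hx₁).comp x hsub).sub (hasDerivAt_log hx₀)).congr_deriv ?_
    simp only [binEntDeriv, Nat.factorial_zero, Nat.cast_one, Nat.cast_zero, zero_add, zpow_neg_one]
    ring
  | succ k =>
    refine ((((hasDerivAt_zpow (-(k + 1 : ℤ)) x (.inl hx₀)).const_mul ((-1) ^ (k + 1))).sub
      ((hasDerivAt_zpow (-(k + 1 : ℤ)) (1 - x) (.inl hx₁)).comp x hsub)).const_mul
      (k.factorial : ℝ)).congr_deriv ?_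
    simp only [binEntDeriv, Nat.factorial_succ,
      show -((k : ℤ) + 1) - 1 = -((k + 1 : ℕ) + 1) by push_cast; ring]
    push_cast
    ring

theorem eq_one_half_of_binEntDeriv_eq_zero {k : ℕ} {x : ℝ} (hx : x ∈ Ioo 0 1)
    (h : binEntDeriv k x = 0) : x = 1 / 2 := by
  have hx₀ : 0 < x := hx.1
  have hx₁ : 0 < 1 - x := sub_pos.2 hx.2
  suffices x = 1 - x by linarith
  cases k with
  | zero => exact log_injOn_pos hx₀ hx₁ (sub_eq_zero.1 h).symm
  | succ k =>
    have h' : (-1) ^ (k + 1) * x ^ (-(k + 1 : ℤ)) = (1 - x) ^ (-(k + 1 : ℤ)) := by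
      simpa [binEntDeriv, sub_eq_zero, Nat.factorial_ne_zero] using h
    have habs := congrArg abs h'
    rw [abs_mul, abs_pow, abs_neg, abs_one, one_pow, one_mul, abs_of_pos (zpow_pos hx₀ _),
      abs_of_pos (zpow_pos hx₁ _)] at habs
    exact (zpow_left_inj₀ hx₀.le hx₁.le (by omega)).1 habs

theorem encard_zeros_deriv_binEnt_add_eval_le (p : ℝ[X]) :
    {x ∈ Ioo (0 : ℝ) 1 | deriv (fun x => binEnt x + p.eval x) x = 0}.encard ≤
      p.natDegree + 1 := by
  set F : ℕ → ℝ → ℝ := fun k x => binEntDeriv k x + (derivative^[k + 1] p).eval x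
  have hF (k : ℕ) (x : ℝ) (hx : x ∈ Ioo (0 : ℝ) 1) : HasDerivAt (F k) (F (k + 1) x) x := by
    simpa only [F, Function.iterate_succ_apply'] using
      (hasDerivAt_binEntDeriv k hx.1.ne' (sub_pos.2 hx.2).ne').fun_add
        ((derivative^[k + 1] p).hasDerivAt x)
  have hzeros : {x ∈ Ioo 0 1 | deriv (fun x => binEnt x + p.eval x) x = 0} =
      {x ∈ Ioo 0 1 | F 0 x = 0} := by
    ext x
    refine and_congr_right fun hx => ?_
    rw [((hasDerivAt_binEnt hx.1.ne' (sub_pos.2 hx.2).ne').fun_add (p.hasDerivAt x)).deriv]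
    rfl
  have hlast : {x ∈ Ioo 0 1 | F p.natDegree x = 0} ⊆ {1 / 2} := fun x hx =>
    eq_one_half_of_binEntDeriv_eq_zero hx.1 <| by
      simpa only [F, iterate_derivative_eq_zero p.natDegree.lt_succ_self, eval_zero, add_zero]
        using hx.2
  calc _ = {x ∈ Ioo 0 1 | F 0 x = 0}.encard := by rw [hzeros]
    _ ≤ {x ∈ Ioo 0 1 | F p.natDegree x = 0}.encard + p.natDegree :=
      encard_zeros_le_of_hasDerivAt_succ ordConnected_Ioo hF p.natDegree
    _ ≤ 1 + p.natDegree := by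
      grw [encard_le_encard hlast, encard_singleton]
    _ = _ := add_comm _ _

theorem stmt_3 (n : ℕ) (a : Fin (n + 1) → ℝ) :
    {x ∈ Set.Ioo (0 : ℝ) 1 |
        deriv (fun x => binEnt x + ∑ i : Fin (n + 1), a i * x ^ (i : ℕ)) x = 0}.encard
      ≤ n + 1 := by
  have hdeg : (∑ i : Fin (n + 1), C (a i) * X ^ (i : ℕ)).natDegree ≤ n :=
    natDegree_sum_le_of_forall_le _ _ fun i _ =>
      (natDegree_C_mul_X_pow_le _ _).trans (Nat.lt_succ_iff.1 i.2)
  have h := encard_zeros_deriv_binEnt_add_eval_le (∑ i : Fin (n + 1), C (a i) * X ^ (i : ℕ))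
  simp only [eval_finsetSum, eval_mul, eval_C, eval_pow, eval_X] at h
  exact h.trans (by gcongr)
end

section
/- Suppose the function g(x) = H₂(x) + Σ_{j=0}^{N} λ_j x^j (with λ_j ∈ ℝ) has zeros at K distinct points α₁ < α₂ < ⋯ < α_K in (0,1), and moreover g'(α_i) = 0 for i = 2, …, K-1. Then K ≤ (N+4)/2. -/
open Real Set Polynomial

theorem binEnt_eq_binEntropy : binEnt = binEntropy := by
  funext x
  simp only [binEnt, binEntropy, log_inv]
  ring

section Rolle

variable {f f' : ℝ → ℝ} {U : Set ℝ} {s t : Finset ℝ}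

theorem card_le_card_sdiff_add_one_of_hasDerivAt (hU : U.OrdConnected)
    (hf : ∀ x ∈ U, HasDerivAt f (f' x) x) (hsU : ↑s ⊆ U) (hs : ∀ x ∈ s, f x = 0)
    (ht : ∀ x ∈ U, f' x = 0 → x ∈ t) : s.card ≤ (t \ s).card + 1 := by
  refine Finset.card_le_sdiff_of_interleaved fun x hx y hy hxy _ => ?_
  have hIcc : Icc x y ⊆ U := hU.out (hsU hx) (hsU hy)
  obtain ⟨z, hz, hz0⟩ := exists_hasDerivAt_eq_zero hxy
    (fun w hw => (hf w (hIcc hw)).continuousAt.continuousWithinAt)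
    ((hs x hx).trans (hs y hy).symm) (fun w hw => hf w (hIcc (Ioo_subset_Icc_self hw)))
  exact ⟨z, ht z (hIcc (Ioo_subset_Icc_self hz)) hz0, hz⟩

theorem two_mul_card_le_card_add_three_of_hasDerivAt (hU : U.OrdConnected)
    (hf : ∀ x ∈ U, HasDerivAt f (f' x) x) (hsU : ↑s ⊆ U) (hs : ∀ x ∈ s, f x = 0)
    (hs' : ∀ x ∈ s, (∃ a ∈ s, a < x) → (∃ b ∈ s, x < b) → f' x = 0)
    (ht : ∀ x ∈ U, f' x = 0 → x ∈ t) : 2 * s.card ≤ t.card + 3 := by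
  rcases s.eq_empty_or_nonempty with rfl | hne
  · simp
  have hinterior : (s.erase (s.min' hne)).erase (s.max' hne) ⊆ t ∩ s := by
    intro x hx
    obtain ⟨hx_max, hx_min, hxs⟩ : x ≠ s.max' hne ∧ x ≠ s.min' hne ∧ x ∈ s := by simpa using hx
    refine Finset.mem_inter.2 ⟨ht x (hsU hxs) (hs' x hxs ?_ ?_), hxs⟩
    · exact ⟨_, s.min'_mem hne, (s.min'_le x hxs).lt_of_ne' hx_min⟩
    · exact ⟨_, s.max'_mem hne, (s.le_max' x hxs).lt_of_ne hx_max⟩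
  have hrolle := card_le_card_sdiff_add_one_of_hasDerivAt hU hf hsU hs ht
  have h₁ := Finset.card_le_card hinterior
  have h₂ := Finset.pred_card_le_card_erase (s := s.erase (s.min' hne)) (a := s.max' hne)
  have h₃ := Finset.pred_card_le_card_erase (s := s) (a := s.min' hne)
  have h₄ := Finset.card_sdiff_add_card_inter t s
  omega

end Rolle

theorem natDegree_X_mul_one_sub_X_mul_derivative_derivative_le {R : Type*} [CommRing R]
    (p : R[X]) : (X * (1 - X) * derivative (derivative p)).natDegree ≤ p.natDegree := by
  by_cases hp'' : derivative (derivative p) = 0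
  · simp [hp'']
  have hp' : derivative p ≠ 0 := fun h => hp'' (by rw [h, derivative_zero])
  have h₁ := natDegree_derivative_lt (mt derivative_of_natDegree_zero hp'')
  have h₂ := natDegree_derivative_lt (mt derivative_of_natDegree_zero hp')
  have h₃ : (X * (1 - X) : R[X]).natDegree ≤ 2 := by compute_degree
  have h₄ := natDegree_mul_le (p := X * (1 - X)) (q := derivative (derivative p))
  omega

theorem hasDerivAt_log_one_sub_sub_log_add_eval (q : ℝ[X]) {x : ℝ} (hx₀ : x ≠ 0)
    (hx₁ : x ≠ 1) :
    HasDerivAt (fun y => log (1 - y) - log y + q.eval y)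
      ((derivative q).eval x - x⁻¹ - (1 - x)⁻¹) x := by
  have hsub : HasDerivAt (fun y : ℝ => 1 - y) (-1) x := by
    simpa using (hasDerivAt_id x).const_sub 1
  have h := (((hasDerivAt_log (sub_ne_zero.2 hx₁.symm)).comp x hsub).sub
    (hasDerivAt_log hx₀)).add (q.hasDerivAt x)
  exact h.congr_deriv (by ring)

theorem exists_finset_card_le_of_log_one_sub_sub_log_add_eval_eq_zero (p : ℝ[X]) :
    ∃ t : Finset ℝ, t.card ≤ p.natDegree + 1 ∧
      ∀ x ∈ Ioo (0 : ℝ) 1, log (1 - x) - log x + (derivative p).eval x = 0 → x ∈ t := by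
  classical
  set Q : ℝ[X] := X * (1 - X) * derivative (derivative p) - 1
  have hQ : Q ≠ 0 := fun h => by simpa [Q] using congrArg (eval 0) h
  have hQdeg : Q.natDegree ≤ p.natDegree := (natDegree_sub_le _ _).trans
    (by simpa using natDegree_X_mul_one_sub_X_mul_derivative_derivative_le p)
  -- `Q(x) = x (1 - x) g''(x)` for `g = binEntropy + p.eval`
  have hroots : ∀ x ∈ Ioo (0 : ℝ) 1,
      (derivative (derivative p)).eval x - x⁻¹ - (1 - x)⁻¹ = 0 → x ∈ Q.roots.toFinset := by
    intro x hx hx0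
    have : (1 : ℝ) - x ≠ 0 := sub_ne_zero.2 hx.2.ne'
    rw [Multiset.mem_toFinset, mem_roots hQ]
    field_simp [hx.1.ne'] at hx0
    simp only [Q, IsRoot, eval_sub, eval_mul, eval_X, eval_one]
    linarith
  set Z := {x | x ∈ Ioo (0 : ℝ) 1 ∧ log (1 - x) - log x + (derivative p).eval x = 0}
  have hbound : ∀ s : Finset ℝ, ↑s ⊆ Z → s.card ≤ p.natDegree + 1 := fun s hs =>
    calc s.card ≤ (Q.roots.toFinset \ s).card + 1 :=
          card_le_card_sdiff_add_one_of_hasDerivAt ordConnected_Ioo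
            (fun x hx => hasDerivAt_log_one_sub_sub_log_add_eval _ hx.1.ne' hx.2.ne)
            (fun x hx => (hs hx).1) (fun x hx => (hs hx).2) hroots
      _ ≤ Multiset.card Q.roots + 1 := by
          grw [Finset.sdiff_subset, Multiset.toFinset_card_le]
      _ ≤ p.natDegree + 1 := by grw [card_roots' Q, hQdeg]
  have hfin : Z.Finite := Set.not_infinite.1 fun hinf => by
    obtain ⟨s, hs, hcard⟩ := hinf.exists_subset_card_eq (p.natDegree + 2)
    have := hbound s hs
    omega
  exact ⟨hfin.toFinset, hbound _ (by simp), fun x hx hx0 => hfin.mem_toFinset.2 ⟨hx, hx0⟩⟩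

theorem stmt_5 (N K : ℕ) (lam : Fin (N + 1) → ℝ) (α : Fin K → ℝ)
    (g : ℝ → ℝ)
    (hg : g = fun x => binEnt x + ∑ j : Fin (N + 1), lam j * x ^ (j : ℕ))
    (hmono : StrictMono α)
    (hmem : ∀ i, α i ∈ Set.Ioo (0 : ℝ) 1)
    (hzero : ∀ i, g (α i) = 0)
    (hderiv : ∀ i : Fin K, (i : ℕ) ≠ 0 → (i : ℕ) ≠ K - 1 → deriv g (α i) = 0) :
    (K : ℝ) ≤ (N + 4) / 2 := by
  classical
  set P : ℝ[X] := ∑ j : Fin (N + 1), C (lam j) * X ^ (j : ℕ)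
  have hgP : g = fun x => binEntropy x + P.eval x := by
    simp [hg, P, eval_finsetSum, binEnt_eq_binEntropy]
  have hP : P.natDegree ≤ N := natDegree_sum_le_of_forall_le _ _ fun j _ =>
    (natDegree_C_mul_X_pow_le _ _).trans (Nat.lt_succ_iff.1 j.2)
  have hg' : ∀ x ∈ Ioo (0 : ℝ) 1,
      HasDerivAt g (log (1 - x) - log x + (derivative P).eval x) x := fun x hx =>
    hgP ▸ (hasDerivAt_binEntropy hx.1.ne' hx.2.ne).add (P.hasDerivAt x)
  obtain ⟨t, ht, hzeros⟩ := exists_finset_card_le_of_log_one_sub_sub_log_add_eval_eq_zero P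
  set A := Finset.univ.image α
  have hA : A.card = K := by simpa using Finset.card_image_of_injective Finset.univ hmono.injective
  have hinterior : ∀ x ∈ A, (∃ a ∈ A, a < x) → (∃ b ∈ A, x < b) →
      log (1 - x) - log x + (derivative P).eval x = 0 := by
    simp only [A, Finset.mem_image, Finset.mem_univ, true_and, forall_exists_index,
      forall_apply_eq_imp_iff, exists_exists_eq_and, hmono.lt_iff_lt]
    rintro i j hji k hik
    rw [← (hg' _ (hmem i)).deriv]
    exact hderiv i (by omega) (by omega)
  have hcount := two_mul_card_le_card_add_three_of_hasDerivAt ordConnected_Ioo hg'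
    (by simpa [A, Set.range_subset_iff] using hmem) (by simpa [A] using hzero) hinterior hzeros
  rw [le_div_iff₀ two_pos]
  exact_mod_cast (by omega : K * 2 ≤ N + 4)
end
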